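/- arXiv:2103.04550 — 5 statements merged into one kernel-verified Lean document; each statement's English description precedes it below -/
import Mathlib

section
/- Let h_i(x) = e^{-x_i} / (∑_{j=1}^K e^{-x_j}) be the softmax-type map on ℝ^K and h(x) = (h_1(x),...,h_K(x)). Then for every x ∈ ℝ^K and every Δ ∈ ℝ^K with all coordinates nonnegative, ‖h(x) - h(x+Δ)‖₁ ≤ 2⟨h(x), Δ⟩. -/
open Real Finset

/-- Softmax-type map: `‖h x - h (x+Δ)‖₁ ≤ 2 ⟨h x, Δ⟩` for nonnegative `Δ`. -/
theorem softmax_l1_bound (K : ℕ) (hK : 0 < K)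
    (h : (Fin K → ℝ) → Fin K → ℝ)
    (hh : ∀ x i, h x i = Real.exp (-x i) / ∑ j, Real.exp (-x j))
    (x Δ : Fin K → ℝ) (hΔ : ∀ i, 0 ≤ Δ i) :
    ∑ i, |h x i - h (x + Δ) i| ≤ 2 * ∑ i, h x i * Δ i := by
  haveI : Nonempty (Fin K) := Fin.pos_iff_nonempty.mp hK
  set a : Fin K → ℝ := fun i => Real.exp (-x i) with ha
  set b : Fin K → ℝ := fun i => Real.exp (-(x + Δ) i) with hb
  set S : ℝ := ∑ j, a j with hS
  set T : ℝ := ∑ j, b j with hT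
  have hSpos : 0 < S := Finset.sum_pos (fun i _ => Real.exp_pos _) Finset.univ_nonempty
  have hTpos : 0 < T := Finset.sum_pos (fun i _ => Real.exp_pos _) Finset.univ_nonempty
  have hba : ∀ i, b i ≤ a i := fun i => by
    apply Real.exp_le_exp.mpr
    simp only [Pi.add_apply]
    linarith [hΔ i]
  have hTS : T ≤ S := Finset.sum_le_sum fun i _ => hba i
  have hinv : 1 / S ≤ 1 / T := one_div_le_one_div_of_le hTpos hTS
  have step1 : ∑ i, |h x i - h (x + Δ) i| ≤
      ∑ i, ((a i - b i) / S + b i * (1 / T - 1 / S)) := by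
    apply Finset.sum_le_sum
    intro i _
    rw [hh, hh]
    have hx1 : (∑ j, Real.exp (-x j)) = S := rfl
    have hx2 : (∑ j, Real.exp (-(x + Δ) j)) = T := rfl
    rw [hx1, hx2]
    have heq : a i / S - b i / T = (a i - b i) / S - b i * (1 / T - 1 / S) := by
      field_simp
      ring
    have h1 : 0 ≤ (a i - b i) / S := div_nonneg (by linarith [hba i]) hSpos.le
    have h2 : 0 ≤ b i * (1 / T - 1 / S) :=
      mul_nonneg (Real.exp_pos _).le (by linarith)
    rw [show Real.exp (-x i) / S = a i / S from rfl,
        show Real.exp (-(x + Δ) i) / T = b i / T from rfl, heq, abs_sub_le_iff]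
    constructor <;> linarith
  have step2 : ∑ i, ((a i - b i) / S + b i * (1 / T - 1 / S))
      = 2 * (S - T) / S := by
    rw [Finset.sum_add_distrib, ← Finset.sum_div, ← Finset.sum_mul,
        Finset.sum_sub_distrib, ← hS, ← hT]
    field_simp
    ring
  have step3 : S - T ≤ ∑ i, a i * Δ i := by
    rw [hS, hT, ← Finset.sum_sub_distrib]
    apply Finset.sum_le_sum
    intro i _
    have hbi : b i = a i * Real.exp (-Δ i) := by
      show Real.exp (-(x + Δ) i) = Real.exp (-x i) * Real.exp (-Δ i)
      rw [← Real.exp_add]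
      congr 1
      simp only [Pi.add_apply]
      ring
    have hexp : 1 - Δ i ≤ Real.exp (-Δ i) := by
      have := Real.add_one_le_exp (-Δ i)
      linarith
    have hapos : 0 < a i := Real.exp_pos _
    rw [hbi]
    nlinarith
  have hrhs : ∑ i, h x i * Δ i = (∑ i, a i * Δ i) / S := by
    rw [Finset.sum_div]
    apply Finset.sum_congr rfl
    intro i _
    rw [hh]
    have hx1 : (∑ j, Real.exp (-x j)) = S := rfl
    rw [hx1]
    ring
  calc ∑ i, |h x i - h (x + Δ) i|
      ≤ 2 * (S - T) / S := step1.trans (le_of_eq step2)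
    _ ≤ 2 * (∑ i, a i * Δ i) / S := by
        exact (div_le_div_iff_of_pos_right hSpos).mpr (by linarith)
    _ = 2 * ∑ i, h x i * Δ i := by rw [hrhs]; ring
end

section
/- For every i, every x ∈ ℝ^K and every Δ ∈ ℝ^K with nonnegative coordinates, h_i(x+Δ) - h_i(x) ≥ -Δ_i · h_i(x), where h_i(x) = e^{-x_i}/∑_{j=1}^K e^{-x_j}. -/
open Real Finset

theorem softmax_lower_bound (K : ℕ) (hK : 0 < K)
    (h : (Fin K → ℝ) → Fin K → ℝ)
    (hh : ∀ x i, h x i = Real.exp (-x i) / ∑ j, Real.exp (-x j))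
    (x Δ : Fin K → ℝ) (hΔ : ∀ i, 0 ≤ Δ i) (i : Fin K) :
    -Δ i * h x i ≤ h (x + Δ) i - h x i := by
  have hne : (Finset.univ : Finset (Fin K)).Nonempty := by
    simpa [Finset.univ_nonempty_iff] using Fin.pos_iff_nonempty.mp hK
  have hS : 0 < ∑ j, Real.exp (-x j) :=
    Finset.sum_pos (fun j _ => Real.exp_pos _) hne
  have hS' : 0 < ∑ j, Real.exp (-(x + Δ) j) :=
    Finset.sum_pos (fun j _ => Real.exp_pos _) hne
  have hle : (∑ j, Real.exp (-(x + Δ) j)) ≤ ∑ j, Real.exp (-x j) := by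
    apply Finset.sum_le_sum
    intro j _
    apply Real.exp_le_exp.mpr
    simp [Pi.add_apply]
    linarith [hΔ j]
  have hhx : 0 ≤ h x i := by
    rw [hh]
    positivity
  have key : Real.exp (-Δ i) * h x i ≤ h (x + Δ) i := by
    rw [hh, hh]
    have : Real.exp (-(x + Δ) i) = Real.exp (-Δ i) * Real.exp (-x i) := by
      rw [← Real.exp_add]; simp [Pi.add_apply]
    rw [this, mul_div_assoc]
    apply mul_le_mul_of_nonneg_left _ (Real.exp_pos _).le
    apply div_le_div_of_nonneg_left (Real.exp_pos _).le hS' hle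
  have hexp : 1 - Δ i ≤ Real.exp (-Δ i) := by
    have := Real.add_one_le_exp (-Δ i)
    linarith
  nlinarith [mul_le_mul_of_nonneg_right hexp hhx]
end

section
/- For every i, every x ∈ ℝ^K and every Δ ∈ ℝ^K with nonnegative coordinates, h_i(x+Δ) - h_i(x) ≤ h_i(x+Δ) · (∑_{j=1}^K Δ_j e^{-x_j}) / (∑_{l=1}^K e^{-x_l}), where h_i(x) = e^{-x_i}/∑_{j=1}^K e^{-x_j}. -/
open Real Finset

theorem softmax_upper_bound (K : ℕ) (hK : 0 < K)
    (h : (Fin K → ℝ) → Fin K → ℝ)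
    (hh : ∀ x i, h x i = Real.exp (-x i) / ∑ j, Real.exp (-x j))
    (x Δ : Fin K → ℝ) (hΔ : ∀ i, 0 ≤ Δ i) (i : Fin K) :
    h (x + Δ) i - h x i ≤
      h (x + Δ) i * (∑ j, Δ j * Real.exp (-x j)) / (∑ l, Real.exp (-x l)) := by
  have hne : Nonempty (Fin K) := ⟨⟨0, hK⟩⟩
  rw [hh, hh]
  set S := ∑ l, Real.exp (-x l) with hSdef
  set T := ∑ j, Real.exp (-(x + Δ) j) with hTdef
  set C := ∑ j, Δ j * Real.exp (-x j) with hCdef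
  have hS : 0 < S := Finset.sum_pos (fun j _ => Real.exp_pos _) Finset.univ_nonempty
  have hT : 0 < T := Finset.sum_pos (fun j _ => Real.exp_pos _) Finset.univ_nonempty
  have hC : S - T ≤ C := by
    rw [hSdef, hTdef, hCdef, ← Finset.sum_sub_distrib]
    apply Finset.sum_le_sum
    intro j _
    have h1 : Real.exp (-(x + Δ) j) = Real.exp (-x j) * Real.exp (-Δ j) := by
      rw [← Real.exp_add, Pi.add_apply]; ring_nf
    rw [h1]
    have h2 : 1 - Δ j ≤ Real.exp (-Δ j) := by
      have := Real.add_one_le_exp (-Δ j); linarith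
    nlinarith [Real.exp_pos (-x j)]
  have hb : Real.exp (-(x + Δ) i) ≤ Real.exp (-x i) := by
    apply Real.exp_le_exp.mpr
    simp only [Pi.add_apply, neg_add]
    linarith [hΔ i]
  have hC0 : 0 ≤ C := Finset.sum_nonneg fun j _ => mul_nonneg (hΔ j) (Real.exp_pos _).le
  rw [div_sub_div _ _ (ne_of_gt hT) (ne_of_gt hS), div_mul_eq_mul_div, div_div,
    div_le_div_iff₀ (by positivity) (by positivity)]
  nlinarith [Real.exp_pos (-(x + Δ) i), Real.exp_pos (-x i), mul_pos hT hS,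
    mul_le_mul_of_nonneg_left hC (Real.exp_pos (-(x + Δ) i)).le,
    mul_le_mul_of_nonneg_right hb hT.le]
end

section
/- Let K ≥ 2 be an integer, let p_i = 1/K for all i, let 0 < η ≤ e^{-2}/2, let γ ≥ 0, and let 0 ≤ ℓ ≤ 1. Fix an index a ∈ {1,...,K}. Define the updated distribution q_i = p_i e^{-η ℓ̃_i} / ∑_j p_j e^{-η ℓ̃_j} where ℓ̃_a = ℓ/(p_a + γ) and ℓ̃_i = 0 for i ≠ a. Then for every i, p_i / q_i ≥ 1 - e²·η. -/
open Finset

theorem exp3_first_update_stability (K : ℕ) (hK : 2 ≤ K)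
    (η γ ℓ : ℝ) (hη : 0 < η) (hη2 : η ≤ Real.exp (-2) / 2)
    (hγ : 0 ≤ γ) (hℓ0 : 0 ≤ ℓ) (hℓ1 : ℓ ≤ 1)
    (a : Fin K) (p lt q : Fin K → ℝ)
    (hp : ∀ i, p i = 1 / K)
    (hlt : ∀ i, lt i = if i = a then ℓ / (p a + γ) else 0)
    (hq : ∀ i, q i = p i * Real.exp (-(η * lt i)) / ∑ j, p j * Real.exp (-(η * lt j))) :
    ∀ i, 1 - Real.exp 2 * η ≤ p i / q i := by
  intro i
  have hK0 : (0:ℝ) < K := by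
    have : (2:ℝ) ≤ K := by exact_mod_cast hK
    linarith
  have hpa : 0 < p a + γ := by rw [hp a]; positivity
  set c := ℓ / (p a + γ) with hc
  have hc0 : 0 ≤ c := div_nonneg hℓ0 hpa.le
  have hlt0 : ∀ j, 0 ≤ lt j := by
    intro j; rw [hlt j]; split <;> simp [hc0]
  have hcK : c ≤ K * ℓ := by
    rw [hc, div_le_iff₀ hpa]
    have h1 : (1:ℝ)/K ≤ p a + γ := by rw [hp a]; linarith
    calc ℓ = ↑K * ℓ * (1/K) := by field_simp
    _ ≤ ↑K * ℓ * (p a + γ) := by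
        apply mul_le_mul_of_nonneg_left h1 (by positivity)
  have hsum1 : ∑ j, p j = 1 := by
    simp [hp, Finset.sum_const, Finset.card_univ]
    field_simp
  have hsum2 : ∑ j, p j * lt j = (1/K) * c := by
    rw [Finset.sum_eq_single a]
    · rw [hp a, hlt a]; simp
    · intro b _ hb; rw [hlt b]; simp [hb]
    · simp
  have hS : 1 - η * ℓ ≤ ∑ j, p j * Real.exp (-(η * lt j)) := by
    have step : ∑ j, p j * (1 - η * lt j) ≤ ∑ j, p j * Real.exp (-(η * lt j)) := by
      apply Finset.sum_le_sum
      intro j _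
      have hpj : 0 ≤ p j := by rw [hp j]; positivity
      apply mul_le_mul_of_nonneg_left _ hpj
      have := Real.add_one_le_exp (-(η * lt j))
      linarith
    have expand : ∑ j, p j * (1 - η * lt j) = 1 - η * ((1/K) * c) := by
      have : ∀ j, p j * (1 - η * lt j) = p j - η * (p j * lt j) := by intro j; ring
      simp_rw [this, Finset.sum_sub_distrib, ← Finset.mul_sum, hsum1, hsum2]
    have hb : η * ((1/K) * c) ≤ η * ℓ := by
      apply mul_le_mul_of_nonneg_left _ hη.le
      calc (1/(K:ℝ)) * c ≤ (1/K) * (K * ℓ) := by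
            exact mul_le_mul_of_nonneg_left hcK (by positivity)
        _ = ℓ := by field_simp
    linarith [step, expand ▸ step]
  set S := ∑ j, p j * Real.exp (-(η * lt j)) with hSdef
  have hηℓ1 : η * ℓ < 1 := by
    have he : Real.exp (-2) / 2 < 1 := by
      have := Real.exp_lt_one_iff.mpr (by norm_num : (-2:ℝ) < 0)
      linarith
    nlinarith
  have hSpos : 0 < S := by linarith
  have hEi : Real.exp (-(η * lt i)) ≤ 1 := by
    apply Real.exp_le_one_iff.mpr
    have := hlt0 i
    nlinarith
  have hEipos : 0 < Real.exp (-(η * lt i)) := Real.exp_pos _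
  have hpi : 0 < p i := by rw [hp i]; positivity
  have hratio : p i / q i = S / Real.exp (-(η * lt i)) := by
    rw [hq i]
    field_simp
  rw [hratio]
  have h1 : S ≤ S / Real.exp (-(η * lt i)) := by
    rw [le_div_iff₀ hEipos]
    nlinarith
  have hηe : η * ℓ ≤ Real.exp 2 * η := by
    have h2 : (1:ℝ) ≤ Real.exp 2 := by
      have := Real.one_le_exp (by norm_num : (0:ℝ) ≤ 2); linarith
    nlinarith
  linarith
end

section
/- Let Φ(L) = -ln(∑_{i=1}^K e^{-L_i}) and let p_i = e^{-L_i}/∑_j e^{-L_j}. For any η > 0 and any ℓ̃ ∈ ℝ^K with nonnegative coordinates, Φ(L + η ℓ̃) - Φ(L) ≥ η ∑_{i=1}^K p_i ℓ̃_i - (η²/2) ∑_{i=1}^K p_i ℓ̃_i². -/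
open Finset

theorem potential_increase_bound (K : ℕ) (hK : 0 < K)
    (Φ : (Fin K → ℝ) → ℝ)
    (hΦ : ∀ L, Φ L = -Real.log (∑ i, Real.exp (-L i)))
    (L lt : Fin K → ℝ) (hlt : ∀ i, 0 ≤ lt i) (η : ℝ) (hη : 0 < η)
    (p : Fin K → ℝ)
    (hp : ∀ i, p i = Real.exp (-L i) / ∑ j, Real.exp (-L j)) :
    η * ∑ i, p i * lt i - η ^ 2 / 2 * ∑ i, p i * lt i ^ 2
      ≤ Φ (fun i => L i + η * lt i) - Φ L := by
  set S := ∑ j, Real.exp (-L j) with hS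
  have hSpos : 0 < S := Finset.sum_pos (fun i _ => Real.exp_pos _)
    (Finset.univ_nonempty_iff.2 ⟨⟨0, hK⟩⟩)
  set T := ∑ i, p i * Real.exp (-(η * lt i)) with hT
  have hTpos : 0 < T := Finset.sum_pos (fun i _ => by
      rw [hp]; positivity)
    (Finset.univ_nonempty_iff.2 ⟨⟨0, hK⟩⟩)
  -- Φ difference equals -log T
  have hdiff : Φ (fun i => L i + η * lt i) - Φ L = -Real.log T := by
    rw [hΦ, hΦ]
    have h1 : (∑ i, Real.exp (-(L i + η * lt i))) = T * S := by
      rw [hT, Finset.sum_mul]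
      refine Finset.sum_congr rfl fun i _ => ?_
      rw [hp]
      field_simp
      rw [← Real.exp_add]
      ring_nf
    rw [h1, Real.log_mul (ne_of_gt hTpos) (ne_of_gt hSpos)]
    ring
  rw [hdiff]
  -- p sums to 1
  have hpsum : ∑ i, p i = 1 := by
    simp only [hp]
    rw [← Finset.sum_div, ← hS, div_self (ne_of_gt hSpos)]
  have hpnn : ∀ i, 0 ≤ p i := fun i => by rw [hp]; positivity
  -- T ≤ 1 - η A + η²/2 B
  have hTle : T ≤ 1 - η * ∑ i, p i * lt i + η ^ 2 / 2 * ∑ i, p i * lt i ^ 2 := by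
    have : T ≤ ∑ i, p i * (1 - η * lt i + (η * lt i) ^ 2 / 2) := by
      refine Finset.sum_le_sum fun i _ => ?_
      refine mul_le_mul_of_nonneg_left ?_ (hpnn i)
      have hx : 0 ≤ η * lt i := mul_nonneg hη.le (hlt i)
      have h2 := Real.quadratic_le_exp_of_nonneg hx
      have hexp : 0 < Real.exp (η * lt i) := Real.exp_pos _
      have hmul : Real.exp (-(η * lt i)) * Real.exp (η * lt i) = 1 := by
        rw [← Real.exp_add]; simp
      nlinarith [Real.exp_pos (-(η * lt i)), sq_nonneg ((η * lt i) ^ 2)]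
    calc T ≤ ∑ i, p i * (1 - η * lt i + (η * lt i) ^ 2 / 2) := this
      _ = ∑ i, (p i - η * (p i * lt i) + η ^ 2 / 2 * (p i * lt i ^ 2)) :=
          Finset.sum_congr rfl fun i _ => by ring
      _ = 1 - η * ∑ i, p i * lt i + η ^ 2 / 2 * ∑ i, p i * lt i ^ 2 := by
          rw [Finset.sum_add_distrib, Finset.sum_sub_distrib, hpsum,
            ← Finset.mul_sum, ← Finset.mul_sum]
  have hlog := Real.log_le_sub_one_of_pos hTpos
  linarith
end
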